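/- Let f : {−1,1}^n → {−1,1}, let s ≥ 2 and ε ∈ (0,1), and suppose Pr_{x uniform}[f(x) ≠ T*(x)] ≤ opt for some decision tree T* of size s. Set τ = ε/log₂ s, d = ⌈log₂(s/ε)⌉, and let δ ≤ ε/log₂ s. Then every decision tree T : {−1,1}^n → {−1,1} of size at most s and depth at most d that minimizes dist(T, f_δ) among all size-s, depth-d decision trees that are everywhere τ-influential with respect to f_δ satisfies Pr_{x uniform}[T(x) ≠ f(x)] ≤ opt + 4ε; in particular at least one such tree exists and satisfies this bound. -/

import Mathlib

/-!
Decision trees over {-1,1}^n and noise smoothing; a point of the cube is encoded as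
`x : Fin n → Bool` (`true` encodes 1, `false` encodes -1).
-/

/-- Decision trees with values in `Y` over `n` boolean variables. -/
inductive DTree (Y : Type) (n : ℕ) : Type
  | leaf : Y → DTree Y n
  | node : Fin n → DTree Y n → DTree Y n → DTree Y n

namespace DTree

variable {Y : Type} {n : ℕ}

/-- The function computed by a decision tree: at a node labeled `i`, follow the right
subtree if `x_i = 1` (`x i = true`) and the left subtree if `x_i = -1` (`x i = false`). -/
def eval : DTree Y n → (Fin n → Bool) → Y
  | .leaf y, _ => y
  | .node i l r, x => if x i then r.eval x else l.eval x

/-- The size of a decision tree is its number of leaves. -/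
def size : DTree Y n → ℕ
  | .leaf _ => 1
  | .node _ l r => l.size + r.size

/-- The depth of a decision tree: the length of its longest root-to-leaf path. -/
def depth : DTree Y n → ℕ
  | .leaf _ => 0
  | .node _ l r => max l.depth r.depth + 1

end DTree

/-- The ±1 real value encoded by a boolean: `true ↦ 1`, `false ↦ -1`. -/
noncomputable def bval (b : Bool) : ℝ := if b then 1 else -1

/-- `Pr_{x uniform}[f(x) ≠ g(x)]` for boolean-valued functions on the cube. -/
noncomputable def probNe {n : ℕ} (f g : (Fin n → Bool) → Bool) : ℝ :=
  (∑ x : Fin n → Bool, if f x = g x then (0 : ℝ) else 1) / 2 ^ n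

/-- The `δ`-smoothed version of `g`: `g_δ(x) = E[g(x̃)]`, where `x̃` is obtained from `x`
by flipping each coordinate independently with probability `δ/2` (equivalently,
rerandomizing each coordinate independently with probability `δ`). -/
noncomputable def smooth {n : ℕ} (δ : ℝ) (g : (Fin n → Bool) → ℝ) (x : Fin n → Bool) : ℝ :=
  ∑ y : Fin n → Bool, (∏ i : Fin n, if y i = x i then 1 - δ / 2 else δ / 2) * g y

/-- `dist(u, v) = E_{x uniform}[|u(x) − v(x)|]` for real-valued functions on the cube. -/
noncomputable def distR {n : ℕ} (u v : (Fin n → Bool) → ℝ) : ℝ :=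
  (∑ x : Fin n → Bool, |u x - v x|) / 2 ^ n

/-- The influence of variable `i` on a real-valued `u`, with respect to the absolute-value
metric: `Inf_i(u) = E_x[|u(x) − u(x^{~i})|]`, where `x` is uniform and `x^{~i}` is `x` with
its `i`-th coordinate rerandomized. -/
noncomputable def inflR {n : ℕ} (u : (Fin n → Bool) → ℝ) (i : Fin n) : ℝ :=
  (∑ x : Fin n → Bool,
      (|u x - u (Function.update x i true)| +
        |u x - u (Function.update x i false)|) / 2) / 2 ^ n

/-- A (boolean-leaved) tree `T` is everywhere `τ`-influential with respect to a real-valued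
`u`: for every internal node `v` of `T`, the variable `i(v)` queried at `v` has influence at
least `τ` on the restriction `u_v` of `u` by the root-to-`v` path in `T`. -/
def EwInflR {n : ℕ} (τ : ℝ) : ((Fin n → Bool) → ℝ) → DTree Bool n → Prop
  | _, .leaf _ => True
  | u, .node i l r =>
      τ ≤ inflR u i ∧
      EwInflR τ (fun x => u (Function.update x i false)) l ∧
      EwInflR τ (fun x => u (Function.update x i true)) r

/-!
Write `G = f_δ`. Coupling `x` with its noisy copy shows that, for every tree `T`, `dist(T, G)` and
`2 Pr[T ≠ f]` differ by at most `δ` times the expected path length of `T`, and by Kraft's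
inequality this is at most `δ log₂ (size T)` when no path queries a variable twice. Everywhere
influential trees never requery a variable, since after a restriction that variable has
influence `0`. The competitor is built from `T*`: remove requeries, truncate at depth `d`
(changing it on a `size/2^d ≤ ε` fraction of inputs), and prune every node of influence below `τ`
by the child with the smaller `dist + 2τ log₂ size`, which by AM-GM of the logarithms costs
at most `2τ log₂ s = 2ε` in `dist(·, G)`. Comparing a minimizer with the competitor gives
`Pr[T ≠ f] ≤ opt + 3ε`.
-/

open Finset Function Real

local notation "⟪" T "⟫" => fun x => bval (DTree.eval T x)

section Cube

variable {ι M : Type*} [DecidableEq ι] [Fintype ι] [AddCommMonoid M]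

theorem sum_update_false_add_update_true (F : (ι → Bool) → M) (i : ι) :
    ∑ x, F (update x i false) + ∑ x, F (update x i true) = 2 • ∑ x, F x := by
  let flip : Equiv.Perm (ι → Bool) :=
    Involutive.toPerm (fun x => update x i (!x i)) fun x => by simp
  have hpair : ∀ x, F (update x i false) + F (update x i true) = F x + F (flip x) := by
    intro x
    change _ = F x + F (update x i (!x i))
    have hx : update x i (x i) = x := update_eq_self i x
    cases hb : x i <;> simp only [hb] at hx <;> simp [hx, add_comm]
  rw [← sum_add_distrib, sum_congr rfl fun x _ => hpair x, sum_add_distrib,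
    Equiv.sum_comp flip F, two_nsmul]

end Cube

theorem logb_two_add_logb_two_le {a b : ℝ} (ha : 0 < a) (hb : 0 < b) :
    logb 2 a + logb 2 b ≤ 2 * logb 2 (a + b) - 2 := by
  have hab : a * b ≤ ((a + b) / 2) ^ 2 := by nlinarith [sq_nonneg (a - b)]
  calc logb 2 a + logb 2 b = logb 2 (a * b) := (logb_mul ha.ne' hb.ne').symm
    _ ≤ logb 2 (((a + b) / 2) ^ 2) := logb_le_logb_of_le one_lt_two (by positivity) hab
    _ = 2 * logb 2 (a + b) - 2 := by
      rw [logb_pow, logb_div (by positivity) two_ne_zero, logb_self_eq_one one_lt_two]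
      push_cast; ring

namespace DTree

variable {Y : Type} {n : ℕ}

def Queries : DTree Y n → Fin n → Prop
  | .leaf _, _ => False
  | .node i l r, j => i = j ∨ l.Queries j ∨ r.Queries j

def NoRequery : DTree Y n → Prop
  | .leaf _ => True
  | .node i l r => ¬ l.Queries i ∧ ¬ r.Queries i ∧ l.NoRequery ∧ r.NoRequery

def pathLength : DTree Y n → (Fin n → Bool) → ℕ
  | .leaf _, _ => 0
  | .node i l r, x => (if x i then r.pathLength x else l.pathLength x) + 1

noncomputable def avgPathLength (T : DTree Y n) : ℝ :=
  (∑ x, (T.pathLength x : ℝ)) / 2 ^ n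

theorem one_le_size (T : DTree Y n) : 1 ≤ T.size := by
  induction T with
  | leaf => exact le_rfl
  | node _ l r _ _ => simp only [size]; omega

theorem eval_update_of_not_queries {T : DTree Y n} {j : Fin n} (h : ¬ T.Queries j)
    (x : Fin n → Bool) (b : Bool) : T.eval (update x j b) = T.eval x := by
  induction T with
  | leaf => rfl
  | node i l r ihl ihr =>
    simp only [Queries, not_or] at h
    simp [eval, update_of_ne h.1, ihl h.2.1, ihr h.2.2]

theorem pathLength_update_of_not_queries {T : DTree Y n} {j : Fin n} (h : ¬ T.Queries j)
    (x : Fin n → Bool) (b : Bool) : T.pathLength (update x j b) = T.pathLength x := by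
  induction T with
  | leaf => rfl
  | node i l r ihl ihr =>
    simp only [Queries, not_or] at h
    simp [pathLength, update_of_ne h.1, ihl h.2.1, ihr h.2.2]

theorem avgPathLength_node {i : Fin n} {l r : DTree Y n} (hl : ¬ l.Queries i)
    (hr : ¬ r.Queries i) :
    (node i l r).avgPathLength = 1 + (l.avgPathLength + r.avgPathLength) / 2 := by
  have key := sum_update_false_add_update_true (fun x => ((node i l r).pathLength x : ℝ)) i
  have hl' : ∀ x, ((node i l r).pathLength (update x i false) : ℝ) = l.pathLength x + 1 := by
    simp [pathLength, pathLength_update_of_not_queries hl]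
  have hr' : ∀ x, ((node i l r).pathLength (update x i true) : ℝ) = r.pathLength x + 1 := by
    simp [pathLength, pathLength_update_of_not_queries hr]
  simp only [hl', hr', sum_add_distrib, sum_const, card_univ,
    Fintype.card_pi, Fintype.card_bool, prod_const, Fintype.card_fin, nsmul_eq_mul, mul_one] at key
  simp only [avgPathLength]
  field_simp
  push_cast at key ⊢
  linarith

theorem NoRequery.avgPathLength_le {T : DTree Y n} (hT : T.NoRequery) :
    T.avgPathLength ≤ logb 2 T.size := by
  induction T with
  | leaf => simp [avgPathLength, pathLength, size]
  | node i l r ihl ihr =>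
    obtain ⟨hl, hr, hl', hr'⟩ := hT
    have := logb_two_add_logb_two_le (a := l.size) (b := r.size)
      (by exact_mod_cast l.one_le_size) (by exact_mod_cast r.one_le_size)
    rw [avgPathLength_node hl hr, size, Nat.cast_add]
    linarith [ihl hl', ihr hr']

/-- `ρ` records the answers fixed on the path from the root; a node querying a fixed variable
is replaced by the branch that answer selects. -/
def removeRequeries (ρ : Fin n → Option Bool) : DTree Y n → DTree Y n
  | .leaf y => .leaf y
  | .node i l r =>
    match ρ i with
    | some b => if b then removeRequeries ρ r else removeRequeries ρ l
    | none => .node i (removeRequeries (update ρ i (some false)) l)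
        (removeRequeries (update ρ i (some true)) r)

theorem eval_removeRequeries (T : DTree Y n) {ρ : Fin n → Option Bool} {x : Fin n → Bool}
    (hx : ∀ j b, ρ j = some b → x j = b) : (T.removeRequeries ρ).eval x = T.eval x := by
  induction T generalizing ρ with
  | leaf => rfl
  | node i l r ihl ihr =>
    cases hρ : ρ i with
    | some b =>
      cases b <;> simp [removeRequeries, hρ, eval, hx i _ hρ, ihl hx, ihr hx]
    | none =>
      have hx' : ∀ b, x i = b → ∀ j c, update ρ i (some b) j = some c → x j = c := by
        intro b hb j c hj
        by_cases hji : j = i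
        · subst hji; simp_all
        · exact hx j c (by simpa [update_of_ne hji] using hj)
      cases hb : x i <;> simp [removeRequeries, hρ, eval, hb, ihl (hx' _ hb), ihr (hx' _ hb)]

theorem not_queries_removeRequeries (T : DTree Y n) {ρ : Fin n → Option Bool} {j : Fin n}
    (hj : (ρ j).isSome) : ¬ (T.removeRequeries ρ).Queries j := by
  induction T generalizing ρ with
  | leaf => exact id
  | node i l r ihl ihr =>
    cases hρ : ρ i with
    | some b => cases b <;> simp [removeRequeries, hρ, ihl hj, ihr hj]
    | none =>
      have hij : i ≠ j := by rintro rfl; simp [hρ] at hj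
      have hj' : ∀ b, (update ρ i (some b) j).isSome := by simpa [update_of_ne hij.symm]
      simp [removeRequeries, hρ, Queries, hij, ihl (hj' _), ihr (hj' _)]

theorem noRequery_removeRequeries (T : DTree Y n) (ρ : Fin n → Option Bool) :
    (T.removeRequeries ρ).NoRequery := by
  induction T generalizing ρ with
  | leaf => trivial
  | node i l r ihl ihr =>
    cases hρ : ρ i with
    | some b => cases b <;> simp [removeRequeries, hρ, ihl, ihr]
    | none =>
      simp only [removeRequeries, hρ, NoRequery]
      exact ⟨not_queries_removeRequeries l (by simp), not_queries_removeRequeries r (by simp),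
        ihl _, ihr _⟩

theorem size_removeRequeries_le (T : DTree Y n) (ρ : Fin n → Option Bool) :
    (T.removeRequeries ρ).size ≤ T.size := by
  induction T generalizing ρ with
  | leaf => exact le_rfl
  | node i l r ihl ihr =>
    have := ihl ρ; have := ihr ρ
    have := ihl (update ρ i (some false)); have := ihr (update ρ i (some true))
    cases hρ : ρ i with
    | some b =>
      cases b <;> simp only [removeRequeries, hρ, Bool.false_eq_true, ↓reduceIte, size] <;> omega
    | none => simp only [removeRequeries, hρ, size]; omega

def truncate (y : Y) : ℕ → DTree Y n → DTree Y n
  | 0, _ => .leaf y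
  | _ + 1, .leaf y' => .leaf y'
  | k + 1, .node i l r => .node i (truncate y k l) (truncate y k r)

theorem size_truncate_le (y : Y) (k : ℕ) (T : DTree Y n) : (T.truncate y k).size ≤ T.size := by
  induction k generalizing T with
  | zero => exact T.one_le_size
  | succ k ih =>
    cases T with
    | leaf => exact le_rfl
    | node i l r => exact Nat.add_le_add (ih l) (ih r)

theorem depth_truncate_le (y : Y) (k : ℕ) (T : DTree Y n) : (T.truncate y k).depth ≤ k := by
  induction k generalizing T with
  | zero => exact le_rfl
  | succ k ih =>
    cases T with
    | leaf => exact Nat.zero_le _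
    | node i l r => exact Nat.succ_le_succ (max_le (ih l) (ih r))

theorem Queries.of_truncate {y : Y} {k : ℕ} {T : DTree Y n} {j : Fin n}
    (h : (T.truncate y k).Queries j) : T.Queries j := by
  induction k generalizing T with
  | zero => exact h.elim
  | succ k ih =>
    cases T with
    | leaf => exact h
    | node i l r => exact h.imp_right (Or.imp ih ih)

theorem NoRequery.truncate {T : DTree Y n} (hT : T.NoRequery) (y : Y) (k : ℕ) :
    (T.truncate y k).NoRequery := by
  induction k generalizing T with
  | zero => trivial
  | succ k ih =>
    cases T with
    | leaf => trivial
    | node i l r =>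
      obtain ⟨hl, hr, hl', hr'⟩ := hT
      exact ⟨mt Queries.of_truncate hl, mt Queries.of_truncate hr, ih hl', ih hr'⟩

end DTree

section CubeFunctions

variable {n : ℕ}

theorem distR_comm (u v : (Fin n → Bool) → ℝ) : distR u v = distR v u := by
  simp only [distR, abs_sub_comm]

theorem distR_triangle (u v w : (Fin n → Bool) → ℝ) : distR u w ≤ distR u v + distR v w := by
  rw [distR, distR, distR, ← add_div, ← sum_add_distrib]
  gcongr with x
  exact abs_sub_le _ _ _

theorem abs_bval_sub_bval (a b : Bool) : |bval a - bval b| = if a = b then 0 else 2 := by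
  cases a <;> cases b <;> norm_num [bval]

theorem distR_bval (f g : (Fin n → Bool) → Bool) :
    distR (fun x => bval (f x)) (fun x => bval (g x)) = 2 * probNe f g := by
  simp only [distR, probNe, abs_bval_sub_bval, mul_sum, ← mul_div_assoc]
  congr 1
  exact sum_congr rfl fun x _ => by split_ifs <;> norm_num

theorem distR_bval_le_two (f g : (Fin n → Bool) → Bool) :
    distR (fun x => bval (f x)) (fun x => bval (g x)) ≤ 2 := by
  rw [distR, div_le_iff₀ (by positivity)]
  calc ∑ x, |bval (f x) - bval (g x)| ≤ ∑ _x : Fin n → Bool, (2 : ℝ) :=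
        sum_le_sum fun x _ => by rw [abs_bval_sub_bval]; split_ifs <;> norm_num
    _ = 2 * 2 ^ n := by simp [mul_comm]

theorem distR_update_eq_inflR (g : (Fin n → Bool) → ℝ) (i : Fin n) (b : Bool) :
    distR (fun x => g (update x i b)) g = inflR g i := by
  have key : ∀ c, ∑ x, |g x - g (update x i c)|
      = (∑ x, |g (update x i false) - g (update x i true)|) / 2 := by
    intro c
    have := sum_update_false_add_update_true (fun x => |g x - g (update x i c)|) i
    cases c <;>
      simp only [update_idem, sub_self, abs_zero, sum_const_zero, zero_add, add_zero,
        abs_sub_comm (g (update _ i true)), nsmul_eq_mul, Nat.cast_ofNat] at this <;> linarith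
  rw [distR, inflR, ← sum_div, sum_add_distrib, key, key]
  simp_rw [abs_sub_comm (g (update _ i b)), key]
  ring

theorem update_update_eq_of_forall_update_eq {u : (Fin n → Bool) → ℝ} {j : Fin n}
    (hu : ∀ x b, u (update x j b) = u x) {i : Fin n} {c : Bool} (x : Fin n → Bool) (b : Bool) :
    u (update (update x j b) i c) = u (update x i c) := by
  by_cases hij : i = j
  · subst hij; simp
  · rw [update_comm (Ne.symm hij), hu]

theorem inflR_eq_zero_of_update_eq {u : (Fin n → Bool) → ℝ} {i : Fin n}
    (h : ∀ x b, u (update x i b) = u x) : inflR u i = 0 := by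
  simp [inflR, h]

end CubeFunctions

namespace DTree

variable {n : ℕ}

theorem not_queries_of_ewInflR {τ : ℝ} (hτ : 0 < τ) {T : DTree Bool n}
    {u : (Fin n → Bool) → ℝ} (hT : EwInflR τ u T) {j : Fin n}
    (hu : ∀ x b, u (update x j b) = u x) : ¬ T.Queries j := by
  induction T generalizing u with
  | leaf => exact id
  | node i l r ihl ihr =>
    obtain ⟨hi, hl, hr⟩ := hT
    rintro (rfl | hjl | hjr)
    · rw [inflR_eq_zero_of_update_eq hu] at hi
      linarith
    · exact ihl hl (update_update_eq_of_forall_update_eq hu) hjl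
    · exact ihr hr (update_update_eq_of_forall_update_eq hu) hjr

theorem noRequery_of_ewInflR {τ : ℝ} (hτ : 0 < τ) {T : DTree Bool n}
    {u : (Fin n → Bool) → ℝ} (hT : EwInflR τ u T) : T.NoRequery := by
  induction T generalizing u with
  | leaf => trivial
  | node i l r ihl ihr =>
    obtain ⟨-, hl, hr⟩ := hT
    exact ⟨not_queries_of_ewInflR hτ hl (by simp), not_queries_of_ewInflR hτ hr (by simp),
      ihl hl, ihr hr⟩

theorem distR_node (g : (Fin n → Bool) → ℝ) {i : Fin n} {l r : DTree Bool n}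
    (hl : ¬ l.Queries i) (hr : ¬ r.Queries i) :
    distR ⟪node i l r⟫ g = (distR ⟪l⟫ (fun x => g (update x i false))
      + distR ⟪r⟫ (fun x => g (update x i true))) / 2 := by
  have key := sum_update_false_add_update_true
    (fun x => |bval ((node i l r).eval x) - g x|) i
  simp only [eval, update_self, eval_update_of_not_queries hl, eval_update_of_not_queries hr,
    Bool.false_eq_true, ↓reduceIte, nsmul_eq_mul, Nat.cast_ofNat] at key
  simp only [distR, eval]
  field_simp
  linarith

theorem distR_truncate_le {T : DTree Bool n} (hT : T.NoRequery) (y : Bool) (k : ℕ) :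
    distR ⟪T.truncate y k⟫ ⟪T⟫ ≤ 2 * T.size / 2 ^ k := by
  induction k generalizing T with
  | zero =>
    have := distR_bval_le_two (T.truncate y 0).eval T.eval
    have : (1 : ℝ) ≤ T.size := by exact_mod_cast T.one_le_size
    simp only [pow_zero, div_one]
    linarith
  | succ k ih =>
    cases T with
    | leaf =>
      simp only [truncate, distR, eval, sub_self, abs_zero, sum_const_zero, zero_div]
      positivity
    | node i l r =>
      obtain ⟨hl, hr, hl', hr'⟩ := hT
      rw [truncate, distR_node _ (mt Queries.of_truncate hl) (mt Queries.of_truncate hr)]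
      simp only [eval, update_self, eval_update_of_not_queries hl, eval_update_of_not_queries hr,
        Bool.false_eq_true, ↓reduceIte, size, Nat.cast_add, pow_succ]
      calc _ ≤ ((2 * l.size / 2 ^ k + 2 * r.size / 2 ^ k) / 2 : ℝ) := by
            gcongr
            exacts [ih hl', ih hr']
        _ = _ := by ring

noncomputable def prune (τ : ℝ) : ((Fin n → Bool) → ℝ) → DTree Bool n → DTree Bool n
  | _, .leaf b => .leaf b
  | g, .node i l r =>
    if τ ≤ inflR g i then
      .node i (prune τ (fun x => g (update x i false)) l)
        (prune τ (fun x => g (update x i true)) r)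
    else if distR ⟪l⟫ (fun x => g (update x i false)) + 2 * τ * logb 2 l.size
        ≤ distR ⟪r⟫ (fun x => g (update x i true)) + 2 * τ * logb 2 r.size then
      prune τ g l
    else prune τ g r

variable {τ : ℝ}

theorem size_prune_le (g : (Fin n → Bool) → ℝ) (T : DTree Bool n) :
    (T.prune τ g).size ≤ T.size := by
  induction T generalizing g with
  | leaf => exact le_rfl
  | node i l r ihl ihr =>
    have := ihl g; have := ihr g
    have := ihl (fun x => g (update x i false)); have := ihr (fun x => g (update x i true))
    have := l.one_le_size; have := r.one_le_size
    rw [prune]; split_ifs <;> simp only [size] <;> omega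

theorem depth_prune_le (g : (Fin n → Bool) → ℝ) (T : DTree Bool n) :
    (T.prune τ g).depth ≤ T.depth := by
  induction T generalizing g with
  | leaf => exact le_rfl
  | node i l r ihl ihr =>
    have := ihl g; have := ihr g
    have := ihl (fun x => g (update x i false)); have := ihr (fun x => g (update x i true))
    rw [prune]; split_ifs <;> simp only [depth] <;> omega

theorem Queries.of_prune {g : (Fin n → Bool) → ℝ} {T : DTree Bool n} {j : Fin n}
    (h : (T.prune τ g).Queries j) : T.Queries j := by
  induction T generalizing g with
  | leaf => exact h
  | node i l r ihl ihr =>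
    rw [prune] at h
    split_ifs at h
    · exact h.imp_right (Or.imp ihl ihr)
    · exact Or.inr (Or.inl (ihl h))
    · exact Or.inr (Or.inr (ihr h))

theorem ewInflR_prune (g : (Fin n → Bool) → ℝ) (T : DTree Bool n) :
    EwInflR τ g (T.prune τ g) := by
  induction T generalizing g with
  | leaf => trivial
  | node i l r ihl ihr =>
    rw [prune]
    split_ifs with h
    exacts [⟨h, ihl _, ihr _⟩, ihl g, ihr g]

theorem NoRequery.distR_prune_le {T : DTree Bool n} (hT : T.NoRequery) (hτ : 0 ≤ τ)
    (g : (Fin n → Bool) → ℝ) :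
    distR ⟪T.prune τ g⟫ g ≤ distR ⟪T⟫ g + 2 * τ * logb 2 T.size := by
  induction T generalizing g with
  | leaf => simp [prune, size]
  | node i l r ihl ihr =>
    obtain ⟨hl, hr, hl', hr'⟩ := hT
    have hlog := mul_le_mul_of_nonneg_left (logb_two_add_logb_two_le (a := l.size) (b := r.size)
      (by exact_mod_cast l.one_le_size) (by exact_mod_cast r.one_le_size)) hτ
    have promote : ∀ (c : DTree Bool n) (b : Bool), inflR g i < τ →
        distR ⟪c.prune τ g⟫ g ≤ distR ⟪c⟫ g + 2 * τ * logb 2 c.size →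
        distR ⟪c.prune τ g⟫ g
          ≤ distR ⟪c⟫ (fun x => g (update x i b)) + τ + 2 * τ * logb 2 c.size := by
      intro c b hi hc
      have := distR_triangle ⟪c⟫ (fun x => g (update x i b)) g
      rw [distR_update_eq_inflR] at this
      linarith
    rw [prune, distR_node g hl hr, size, Nat.cast_add]
    split_ifs with hi hAB
    · rw [distR_node _ (mt Queries.of_prune hl) (mt Queries.of_prune hr)]
      linarith [ihl hl' (fun x => g (update x i false)), ihr hr' (fun x => g (update x i true))]
    · linarith [promote l false (not_le.mp hi) (ihl hl' g)]
    · linarith [promote r true (not_le.mp hi) (ihr hr' g)]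

end DTree

section Smoothing

variable {n : ℕ} {δ : ℝ}

noncomputable def noiseKernel (δ : ℝ) (x y : Fin n → Bool) : ℝ :=
  ∏ i, if y i = x i then 1 - δ / 2 else δ / 2

theorem noiseKernel_nonneg (h0 : 0 ≤ δ) (h2 : δ ≤ 2) (x y : Fin n → Bool) :
    0 ≤ noiseKernel δ x y :=
  prod_nonneg fun i _ => by split_ifs <;> linarith

theorem noiseKernel_comm (x y : Fin n → Bool) : noiseKernel δ x y = noiseKernel δ y x := by
  simp only [noiseKernel, eq_comm]

theorem sum_noiseKernel_mul_prod (x : Fin n → Bool) (φ : Fin n → Bool → ℝ) :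
    ∑ y, noiseKernel δ x y * ∏ j, φ j (y j)
      = ∏ j, ((1 - δ / 2) * φ j (x j) + δ / 2 * φ j (!x j)) := by
  simp only [noiseKernel, ← prod_mul_distrib]
  rw [← Fintype.prod_sum fun j b => (if b = x j then 1 - δ / 2 else δ / 2) * φ j b]
  refine prod_congr rfl fun j _ => ?_
  cases x j <;> simp [add_comm]

theorem sum_noiseKernel (x : Fin n → Bool) : ∑ y, noiseKernel δ x y = 1 := by
  simpa using sum_noiseKernel_mul_prod (δ := δ) x fun _ _ => 1

theorem sum_noiseKernel_mul_ne (x : Fin n → Bool) (i : Fin n) :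
    ∑ y, noiseKernel δ x y * (if y i = x i then 0 else 1) = δ / 2 := by
  have := sum_noiseKernel_mul_prod (δ := δ) x
    fun j b => if j = i then (if b = x j then 0 else 1) else 1
  simp only [prod_ite_eq', mem_univ, if_true] at this
  rw [this, prod_eq_single i]
  · simp
  · intro j _ hj; simp [hj]
  · simp

theorem abs_bval_sub_smooth (h0 : 0 ≤ δ) (h2 : δ ≤ 2) (f : (Fin n → Bool) → Bool) (c : Bool)
    (x : Fin n → Bool) :
    |bval c - smooth δ (fun z => bval (f z)) x|
      = ∑ y, noiseKernel δ x y * |bval c - bval (f y)| := by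
  -- Every `bval c - bval (f y)` has the sign of `bval c`, so `|·|` commutes with the average.
  have hsign : ∀ b, bval c - bval b = bval c * |bval c - bval b| := by
    intro b; cases b <;> cases c <;> norm_num [bval]
  have hc : |bval c| = 1 := by cases c <;> norm_num [bval]
  calc |bval c - smooth δ (fun z => bval (f z)) x|
      = |∑ y, noiseKernel δ x y * (bval c - bval (f y))| := by
        simp only [smooth, mul_sub, sum_sub_distrib, ← sum_mul, sum_noiseKernel, one_mul]
        rfl
    _ = |bval c| * ∑ y, noiseKernel δ x y * |bval c - bval (f y)| := by
        rw [sum_congr rfl fun y _ => by rw [hsign, mul_left_comm], ← mul_sum, abs_mul,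
          abs_of_nonneg (sum_nonneg fun y _ =>
            mul_nonneg (noiseKernel_nonneg h0 h2 x y) (abs_nonneg _))]
    _ = _ := by rw [hc, one_mul]

end Smoothing

namespace DTree

variable {n : ℕ} {δ : ℝ}

theorem sum_noiseKernel_mul_abs_sub_le (h0 : 0 ≤ δ) (h2 : δ ≤ 2) (T : DTree Bool n)
    (x : Fin n → Bool) :
    ∑ y, noiseKernel δ x y * |bval (T.eval x) - bval (T.eval y)| ≤ δ * T.pathLength x := by
  induction T with
  | leaf => simp [eval, pathLength]
  | node i l r ihl ihr =>
    have step : ∀ c : DTree Bool n, (∀ y, y i = x i → (node i l r).eval y = c.eval y) →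
        ∑ y, noiseKernel δ x y * |bval (c.eval x) - bval (c.eval y)| ≤ δ * c.pathLength x →
        ∑ y, noiseKernel δ x y * |bval ((node i l r).eval x) - bval ((node i l r).eval y)|
          ≤ δ * (c.pathLength x + 1) := by
      intro c hc ih
      have hpt : ∀ y, |bval ((node i l r).eval x) - bval ((node i l r).eval y)|
          ≤ 2 * (if y i = x i then 0 else 1) + |bval (c.eval x) - bval (c.eval y)| := by
        intro y
        by_cases hy : y i = x i
        · simp [hy, hc y hy, hc x rfl]
        · simp only [hy, if_false, abs_bval_sub_bval]
          split_ifs <;> norm_num [abs_nonneg]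
      calc _ ≤ ∑ y, noiseKernel δ x y * (2 * (if y i = x i then 0 else 1)
              + |bval (c.eval x) - bval (c.eval y)|) :=
            sum_le_sum fun y _ => mul_le_mul_of_nonneg_left (hpt y) (noiseKernel_nonneg h0 h2 x y)
        _ = 2 * ∑ y, noiseKernel δ x y * (if y i = x i then 0 else 1)
              + ∑ y, noiseKernel δ x y * |bval (c.eval x) - bval (c.eval y)| := by
            rw [mul_sum, ← sum_add_distrib]
            exact sum_congr rfl fun y _ => by ring
        _ ≤ δ * (c.pathLength x + 1) := by
            rw [sum_noiseKernel_mul_ne]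
            linarith
    cases hx : x i
    · simpa [pathLength, hx] using step l (fun y hy => by simp [eval, hy, hx]) ihl
    · simpa [pathLength, hx] using step r (fun y hy => by simp [eval, hy, hx]) ihr

theorem abs_distR_smooth_sub_distR_le (h0 : 0 ≤ δ) (h2 : δ ≤ 2) (f : (Fin n → Bool) → Bool)
    (T : DTree Bool n) :
    |distR ⟪T⟫ (smooth δ fun x => bval (f x)) - distR ⟪T⟫ (fun x => bval (f x))|
      ≤ δ * T.avgPathLength := by
  have hG : distR ⟪T⟫ (smooth δ fun x => bval (f x))
      = (∑ x, ∑ y, noiseKernel δ x y * |bval (T.eval x) - bval (f y)|) / 2 ^ n := by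
    simp only [distR, abs_bval_sub_smooth h0 h2]
  have hF : distR ⟪T⟫ (fun x => bval (f x))
      = (∑ x, ∑ y, noiseKernel δ x y * |bval (T.eval y) - bval (f y)|) / 2 ^ n := by
    rw [sum_comm]
    simp only [distR, ← sum_mul, noiseKernel_comm _ (_ : Fin n → Bool), sum_noiseKernel, one_mul]
  rw [hG, hF, ← sub_div, abs_div, abs_of_pos (by positivity : (0 : ℝ) < 2 ^ n), avgPathLength,
    mul_div_assoc']
  gcongr
  calc |∑ x, ∑ y, noiseKernel δ x y * |bval (T.eval x) - bval (f y)|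
          - (∑ x, ∑ y, noiseKernel δ x y * |bval (T.eval y) - bval (f y)|)|
      ≤ ∑ x, ∑ y, noiseKernel δ x y * |bval (T.eval x) - bval (T.eval y)| := by
        simp only [← sum_sub_distrib, ← mul_sub]
        refine (abs_sum_le_sum_abs _ _).trans (sum_le_sum fun x _ => ?_)
        refine (abs_sum_le_sum_abs _ _).trans (sum_le_sum fun y _ => ?_)
        rw [abs_mul, abs_of_nonneg (noiseKernel_nonneg h0 h2 x y)]
        refine mul_le_mul_of_nonneg_left ?_ (noiseKernel_nonneg h0 h2 x y)
        simpa using abs_abs_sub_abs_le_abs_sub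
          (bval (T.eval x) - bval (f y)) (bval (T.eval y) - bval (f y))
    _ ≤ ∑ x, δ * (T.pathLength x : ℝ) :=
        sum_le_sum fun x _ => sum_noiseKernel_mul_abs_sub_le h0 h2 T x
    _ = δ * ∑ x, (T.pathLength x : ℝ) := (mul_sum _ _ _).symm

theorem two_mul_probNe_le_of_ewInflR (h0 : 0 ≤ δ) (h2 : δ ≤ 2) {τ : ℝ} (hτ : 0 < τ)
    {f : (Fin n → Bool) → Bool} {T : DTree Bool n}
    (hT : EwInflR τ (smooth δ fun x => bval (f x)) T) :
    2 * probNe T.eval f ≤ distR ⟪T⟫ (smooth δ fun x => bval (f x)) + δ * logb 2 T.size := by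
  have hsmooth := (abs_le.mp (abs_distR_smooth_sub_distR_le h0 h2 f T)).1
  have hkraft := mul_le_mul_of_nonneg_left (noRequery_of_ewInflR hτ hT).avgPathLength_le h0
  rw [distR_bval] at hsmooth
  linarith

theorem exists_ewInflR_distR_smooth_le (h0 : 0 ≤ δ) (h2 : δ ≤ 2) {τ : ℝ} (hτ : 0 ≤ τ)
    (f : (Fin n → Bool) → Bool) {Tstar : DTree Bool n} {s : ℕ} (hs : Tstar.size ≤ s) (d : ℕ) :
    ∃ T : DTree Bool n, T.size ≤ s ∧ T.depth ≤ d ∧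
      EwInflR τ (smooth δ fun x => bval (f x)) T ∧
      distR ⟪T⟫ (smooth δ fun x => bval (f x))
        ≤ 2 * probNe f Tstar.eval + 2 * s / 2 ^ d + (δ + 2 * τ) * logb 2 s := by
  set T₁ := Tstar.removeRequeries fun _ => none
  have h₁ : T₁.NoRequery := noRequery_removeRequeries _ _
  have h₁s : T₁.size ≤ s := (size_removeRequeries_le _ _).trans hs
  have h₁eval : ⟪T₁⟫ = ⟪Tstar⟫ :=
    funext fun x => congrArg bval (eval_removeRequeries _ (by simp))
  set T₂ := T₁.truncate true d
  have h₂ : T₂.NoRequery := h₁.truncate true d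
  have h₂s : T₂.size ≤ s := (size_truncate_le _ _ _).trans h₁s
  refine ⟨T₂.prune τ _, (size_prune_le _ T₂).trans h₂s,
    (depth_prune_le _ T₂).trans (depth_truncate_le _ _ _), ewInflR_prune _ T₂, ?_⟩
  have hlog : logb 2 T₂.size ≤ logb 2 s :=
    logb_le_logb_of_le one_lt_two (by exact_mod_cast T₂.one_le_size) (by exact_mod_cast h₂s)
  have htrunc : distR ⟪T₂⟫ ⟪T₁⟫ ≤ 2 * s / 2 ^ d :=
    (distR_truncate_le h₁ true d).trans (by gcongr)
  have hsmooth := (abs_le.mp (abs_distR_smooth_sub_distR_le h0 h2 f T₂)).2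
  have hkraft := mul_le_mul_of_nonneg_left (h₂.avgPathLength_le.trans hlog) h0
  have hprune := h₂.distR_prune_le hτ (smooth δ fun x => bval (f x))
  have hprune' := mul_le_mul_of_nonneg_left hlog (by positivity : (0 : ℝ) ≤ 2 * τ)
  have htri := distR_triangle ⟪T₂⟫ ⟪T₁⟫ (fun x => bval (f x))
  have hstar : distR ⟪T₁⟫ (fun x => bval (f x)) = 2 * probNe f Tstar.eval := by
    rw [h₁eval, distR_comm, distR_bval]
  linarith

end DTree

theorem exists_min_comp_of_finite {α β γ : Type*} [Finite β] [LinearOrder γ] (e : α → β)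
    (Φ : β → γ) {P : α → Prop} (h : ∃ a, P a) : ∃ a, P a ∧ ∀ a', P a' → Φ (e a) ≤ Φ (e a') := by
  obtain ⟨a, ha⟩ := h
  obtain ⟨_, ⟨a, ha, rfl⟩, hmin⟩ :=
    Set.exists_min_image (e '' {a | P a}) Φ (Set.toFinite _) ⟨e a, a, ha, rfl⟩
  exact ⟨a, ha, fun a' ha' => hmin _ ⟨a', ha', rfl⟩⟩

theorem div_two_pow_natCeil_logb_div_le {a ε : ℝ} (ha : 0 < a) (hε : 0 < ε) :
    a / 2 ^ ⌈logb 2 (a / ε)⌉₊ ≤ ε := by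
  have : a / ε ≤ 2 ^ ⌈logb 2 (a / ε)⌉₊ :=
    calc a / ε = 2 ^ logb 2 (a / ε) := (rpow_logb two_pos (by norm_num) (by positivity)).symm
      _ ≤ 2 ^ (⌈logb 2 (a / ε)⌉₊ : ℝ) := rpow_le_rpow_of_exponent_le one_le_two (Nat.le_ceil _)
      _ = 2 ^ ⌈logb 2 (a / ε)⌉₊ := rpow_natCast 2 _
  rw [div_le_iff₀ hε] at this
  rw [div_le_iff₀ (by positivity)]
  linarith

/-- **Agnostic guarantee of the algorithm.** Suppose `f` is `opt`-close to a size-`s`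
decision tree `T*` (`s ≥ 2`, `ε ∈ (0,1)`). Set `τ = ε/log₂ s`, `d = ⌈log₂(s/ε)⌉`, and let
`0 ≤ δ ≤ ε/log₂ s`. Then every decision tree of size at most `s` and depth at most `d` that
minimizes `dist(T, f_δ)` among all such everywhere `τ`-influential trees (w.r.t. `f_δ`)
satisfies `Pr[T(x) ≠ f(x)] ≤ opt + 4ε`; moreover at least one such tree exists. -/
theorem stmt19 {n : ℕ} (f : (Fin n → Bool) → Bool) (s : ℕ) (hs : 2 ≤ s)
    (ε : ℝ) (hε0 : 0 < ε) (hε1 : ε < 1) (opt : ℝ)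
    (Tstar : DTree Bool n) (hTstarSize : Tstar.size = s)
    (hopt : probNe f Tstar.eval ≤ opt)
    (τ : ℝ) (hτ : τ = ε / Real.logb 2 s)
    (d : ℕ) (hd : d = ⌈Real.logb 2 (s / ε)⌉₊)
    (δ : ℝ) (hδ0 : 0 ≤ δ) (hδ : δ ≤ ε / Real.logb 2 s) :
    (∀ T : DTree Bool n, T.size ≤ s → T.depth ≤ d →
        EwInflR τ (smooth δ fun x => bval (f x)) T →
        (∀ T' : DTree Bool n, T'.size ≤ s → T'.depth ≤ d →
            EwInflR τ (smooth δ fun x => bval (f x)) T' →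
            distR (fun x => bval (T.eval x)) (smooth δ fun x => bval (f x))
              ≤ distR (fun x => bval (T'.eval x)) (smooth δ fun x => bval (f x))) →
        probNe T.eval f ≤ opt + 4 * ε) ∧
    (∃ T : DTree Bool n, T.size ≤ s ∧ T.depth ≤ d ∧
        EwInflR τ (smooth δ fun x => bval (f x)) T ∧
        (∀ T' : DTree Bool n, T'.size ≤ s → T'.depth ≤ d →
            EwInflR τ (smooth δ fun x => bval (f x)) T' →
            distR (fun x => bval (T.eval x)) (smooth δ fun x => bval (f x))
              ≤ distR (fun x => bval (T'.eval x)) (smooth δ fun x => bval (f x))) ∧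
        probNe T.eval f ≤ opt + 4 * ε) := by
  have hL : 1 ≤ logb 2 s := by
    rw [← logb_self_eq_one one_lt_two]
    exact logb_le_logb_of_le one_lt_two two_pos (by exact_mod_cast hs)
  have hτ0 : 0 < τ := hτ ▸ div_pos hε0 (by linarith)
  have hτL : τ * logb 2 s = ε := by rw [hτ]; field_simp
  have hδL : δ * logb 2 s ≤ ε := (le_div_iff₀ (by linarith)).mp hδ
  have hδ2 : δ ≤ 2 := by linarith [hδ.trans (div_le_self hε0.le hL)]
  have hsd : 2 * (s : ℝ) / 2 ^ d ≤ 2 * ε := by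
    rw [mul_div_assoc]
    exact mul_le_mul_of_nonneg_left (hd ▸ div_two_pow_natCeil_logb_div_le (by positivity) hε0)
      zero_le_two
  set G := smooth δ fun x => bval (f x)
  obtain ⟨T₀, hT₀s, hT₀d, hT₀G, hT₀⟩ :=
    DTree.exists_ewInflR_distR_smooth_le hδ0 hδ2 hτ0.le f hTstarSize.le d
  have bound : ∀ T : DTree Bool n, T.size ≤ s → EwInflR τ G T →
      distR ⟪T⟫ G ≤ distR ⟪T₀⟫ G → probNe T.eval f ≤ opt + 4 * ε := by
    intro T hTs hTG hmin
    have hlog : logb 2 T.size ≤ logb 2 s :=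
      logb_le_logb_of_le one_lt_two (by exact_mod_cast T.one_le_size) (by exact_mod_cast hTs)
    have := DTree.two_mul_probNe_le_of_ewInflR hδ0 hδ2 hτ0 hTG
    linarith [mul_le_mul_of_nonneg_left hlog hδ0]
  refine ⟨fun T hTs _ hTG hmin => bound T hTs hTG (hmin T₀ hT₀s hT₀d hT₀G), ?_⟩
  -- The cost of a tree depends only on the function it computes, and there are finitely many.
  obtain ⟨T, ⟨hTs, hTd, hTG⟩, hmin⟩ := exists_min_comp_of_finite DTree.eval
    (P := fun T => T.size ≤ s ∧ T.depth ≤ d ∧ EwInflR τ G T)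
    (fun g => distR (fun x => bval (g x)) G) ⟨T₀, hT₀s, hT₀d, hT₀G⟩
  exact ⟨T, hTs, hTd, hTG, fun T' h₁ h₂ h₃ => hmin T' ⟨h₁, h₂, h₃⟩,
    bound T hTs hTG (hmin T₀ ⟨hT₀s, hT₀d, hT₀G⟩)⟩
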